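/- For every partizan game G and Left dead-end X, if Left moving first loses G + X under misère play, then Left moving first also loses G + τ_n(X) for every n ≥ fb(G), where τ_n is the n-th truncation and fb(G) is the formal birthday of G. -/

import Mathlib

/-!
Prove simultaneously the companion statement: if `X` is a Left dead-end, `fb G < n` and Right
moving first wins `G + X`, then Right moving first wins `G + τ_n(X)`. Since `X` has no Left
options, Left can only move in `G`, which lowers `fb G` but leaves the truncation depth alone;
Right's winning replies either move in `G` (again lowering `fb G`) or in `X`, where `τ_{m+1}(X)`
offers the matching option `τ_m(X^R)` and `fb G ≤ m` still holds. Depth `n ≥ fb G` is thus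
never exhausted before play in `G` is.
-/

/-- A (finite) partizan game: finite lists of Left and Right options. -/
inductive Gm : Type where
  | node : List Gm → List Gm → Gm

/-- The Left options of a game. -/
def Gm.leftOpts : Gm → List Gm
  | .node l _ => l

/-- The Right options of a game. -/
def Gm.rightOpts : Gm → List Gm
  | .node _ r => r

/-- Disjunctive sum of games. -/
def Gm.add : Gm → Gm → Gm
  | .node gl gr, .node hl hr =>
      .node
        (gl.attach.map (fun g => Gm.add g.1 (.node hl hr)) ++
         hl.attach.map (fun h => Gm.add (.node gl gr) h.1))
        (gr.attach.map (fun g => Gm.add g.1 (.node hl hr)) ++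
         hr.attach.map (fun h => Gm.add (.node gl gr) h.1))
termination_by g h => sizeOf g + sizeOf h
decreasing_by
  all_goals first
  | (have := List.sizeOf_lt_of_mem g.2; simp; omega)
  | (have := List.sizeOf_lt_of_mem h.2; simp; omega)

mutual
/-- Left, moving first, wins `G` under misère play (a player unable to move wins):
`G` is a Left end, or some Left option is a loss for Right moving first. -/
def Gm.lwins : Gm → Prop
  | .node l _ => l = [] ∨ ∃ g ∈ l.attach, ¬ Gm.rwins g.1
termination_by G => sizeOf G
decreasing_by have := List.sizeOf_lt_of_mem g.2; simp; omega

/-- Right, moving first, wins `G` under misère play. -/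
def Gm.rwins : Gm → Prop
  | .node _ r => r = [] ∨ ∃ g ∈ r.attach, ¬ Gm.lwins g.1
termination_by G => sizeOf G
decreasing_by have := List.sizeOf_lt_of_mem g.2; simp; omega
end

/-- The game `0`. -/
def Gm.zero : Gm := .node [] []

/-- The game `* = {0|0}`. -/
def Gm.star : Gm := .node [Gm.zero] [Gm.zero]

/-- `G` is a Left dead-end: `G` has no Left options, and every subposition
likewise has no Left options. -/
inductive Gm.IsLDE : Gm → Prop
  | mk (r : List Gm) : (∀ g ∈ r, Gm.IsLDE g) → Gm.IsLDE (.node [] r)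

/-- The formal birthday (height of the game tree). -/
def Gm.fb : Gm → ℕ
  | .node l r =>
      max (l.attach.foldr (fun g m => max (Gm.fb g.1 + 1) m) 0)
          (r.attach.foldr (fun g m => max (Gm.fb g.1 + 1) m) 0)
termination_by G => sizeOf G
decreasing_by
  all_goals (have := List.sizeOf_lt_of_mem g.2; simp; omega)

/-- The `n`-th truncation: stop play after `n` moves. -/
def Gm.trunc : ℕ → Gm → Gm
  | 0, _ => Gm.zero
  | n+1, .node l r => .node (l.map (Gm.trunc n)) (r.map (Gm.trunc n))

theorem List.add_one_le_foldr_max {α : Type*} (f : α → ℕ) {l : List α} {a : α} (ha : a ∈ l)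
    (b : ℕ) :
    f a + 1 ≤ l.foldr (fun x m => max (f x + 1) m) b := by
  induction l with
  | nil => cases ha
  | cons x xs ih =>
    rcases List.mem_cons.1 ha with rfl | ha
    · exact le_max_left _ _
    · exact le_max_of_le_right (ih ha)

namespace Gm

theorem lwins_node (l r : List Gm) : lwins (.node l r) ↔ l = [] ∨ ∃ g ∈ l, ¬ rwins g := by
  rw [lwins]
  simp

theorem rwins_node (l r : List Gm) : rwins (.node l r) ↔ r = [] ∨ ∃ g ∈ r, ¬ lwins g := by
  rw [rwins]
  simp

theorem add_node (gl gr hl hr : List Gm) :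
    (Gm.node gl gr).add (.node hl hr) =
      .node (gl.map (·.add (.node hl hr)) ++ hl.map ((Gm.node gl gr).add ·))
        (gr.map (·.add (.node hl hr)) ++ hr.map ((Gm.node gl gr).add ·)) := by
  rw [add]
  simp

theorem not_lwins_add_node_nil (gl gr xr : List Gm) :
    ¬ lwins ((Gm.node gl gr).add (.node [] xr)) ↔
      gl ≠ [] ∧ ∀ g ∈ gl, rwins (g.add (.node [] xr)) := by
  simp [add_node, lwins_node]

theorem rwins_add_node_nil (gl gr xr : List Gm) :
    rwins ((Gm.node gl gr).add (.node [] xr)) ↔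
      (gr = [] ∧ xr = []) ∨ (∃ g ∈ gr, ¬ lwins (g.add (.node [] xr))) ∨
        ∃ x ∈ xr, ¬ lwins ((Gm.node gl gr).add x) := by
  simp only [add_node, rwins_node, List.append_eq_nil_iff, List.map_eq_nil_iff, List.mem_append,
    List.mem_map]
  grind

theorem fb_lt_of_mem_left {l r : List Gm} {g : Gm} (hg : g ∈ l) : fb g < fb (.node l r) := by
  rw [fb]
  exact le_max_of_le_left (List.add_one_le_foldr_max (fb ·.1) (List.mem_attach l ⟨g, hg⟩) 0)

theorem fb_lt_of_mem_right {l r : List Gm} {g : Gm} (hg : g ∈ r) : fb g < fb (.node l r) := by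
  rw [fb]
  exact le_max_of_le_right (List.add_one_le_foldr_max (fb ·.1) (List.mem_attach r ⟨g, hg⟩) 0)

mutual

theorem not_lwins_add_trunc_of_isLDE (G X : Gm) (hX : X.IsLDE) (n : ℕ) (hn : G.fb ≤ n)
    (h : ¬ lwins (G.add X)) : ¬ lwins (G.add (trunc n X)) :=
  match G, hX with
  | .node gl gr, .mk xr hxr => by
    obtain ⟨hgl, hwin⟩ := (not_lwins_add_node_nil gl gr xr).1 h
    obtain ⟨g₀, hg₀⟩ := List.exists_mem_of_ne_nil gl hgl
    obtain ⟨m, rfl⟩ : ∃ m, n = m + 1 :=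
      Nat.exists_eq_add_one.2 ((Nat.zero_le _).trans_lt ((fb_lt_of_mem_left hg₀).trans_le hn))
    refine (not_lwins_add_node_nil gl gr (xr.map (trunc m))).2 ⟨hgl, fun g hg => ?_⟩
    exact rwins_add_trunc_of_isLDE g _ (.mk xr hxr) (m + 1)
      ((fb_lt_of_mem_left hg).trans_le hn) (hwin g hg)
termination_by sizeOf G + sizeOf X
decreasing_by
  have := List.sizeOf_lt_of_mem hg
  simp
  omega

theorem rwins_add_trunc_of_isLDE (G X : Gm) (hX : X.IsLDE) (n : ℕ) (hn : G.fb < n)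
    (h : rwins (G.add X)) : rwins (G.add (trunc n X)) :=
  match G, hX with
  | .node gl gr, .mk xr hxr => by
    obtain ⟨m, rfl⟩ := Nat.exists_eq_add_one.2 ((Nat.zero_le _).trans_lt hn)
    refine (rwins_add_node_nil gl gr (xr.map (trunc m))).2 ?_
    rcases (rwins_add_node_nil gl gr xr).1 h with ⟨rfl, rfl⟩ | ⟨g, hg, hlose⟩ | ⟨x, hx, hlose⟩
    · exact .inl ⟨rfl, rfl⟩
    · exact .inr (.inl ⟨g, hg, not_lwins_add_trunc_of_isLDE g _ (.mk xr hxr) (m + 1)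
        ((fb_lt_of_mem_right hg).trans hn).le hlose⟩)
    · exact .inr (.inr ⟨trunc m x, List.mem_map_of_mem hx,
        not_lwins_add_trunc_of_isLDE _ x (hxr x hx) m (Nat.lt_succ_iff.1 hn) hlose⟩)
termination_by sizeOf G + sizeOf X
decreasing_by
  all_goals
    first
    | have := List.sizeOf_lt_of_mem hg
    | have := List.sizeOf_lt_of_mem hx
    simp
    omega

end

end Gm

/-- if Left moving first loses `G + X` (misère play), `X` a Left
dead-end, then Left moving first loses `G + τ_n(X)` for every `n ≥ fb(G)`. -/
theorem stmt13 (G X : Gm) (hX : X.IsLDE) (n : ℕ) (hn : G.fb ≤ n)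
    (h : ¬ Gm.lwins (G.add X)) : ¬ Gm.lwins (G.add (Gm.trunc n X)) :=
  Gm.not_lwins_add_trunc_of_isLDE G X hX n hn h
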